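/- (Optimal convergence of CWENOZ, regardless of critical points.) Fix an integer r ≥ 2, a real t ≥ 1, and linear coefficients d_0, …, d_r ∈ (0,1) with Σ_{k=0}^{r} d_k = 1. Let u : ℝ → ℝ be of class C^∞. For each h > 0 let ū_j = (1/h)∫_{Ω_j} u; let P_opt^h be the unique polynomial of degree ≤ 2r−2 whose cell averages over Ω_j equal ū_j for j = −r+1, …, r−1; for k = 1, …, r let P_k^h be the unique polynomial of degree ≤ r−1 whose cell averages over Ω_j equal ū_j for j = k−r, …, k−1; and set P_0^h = (P_opt^h − Σ_{k=1}^{r} d_k P_k^h)/d_0. Let I_k(h) = I[P_k^h] be the Jiang–Shu indicators, k = 0, …, r. Suppose τ : (0,h_0) → [0,∞) satisfies τ(h) = O(h^s) for some s > 0, and ε : (0,h_0) → (0,∞) satisfies ε(h) ≥ c h^p for some c > 0 and some exponent p with 0 < p ≤ s − (r−1)/t. Define α_k^Z(h) = d_k (1 + (τ(h)/(I_k(h) + ε(h)))^t), ω_k^Z(h) = α_k^Z(h)/Σ_{i=0}^{r} α_i^Z(h), and P_rec^h = Σ_{k=0}^{r} ω_k^Z(h) P_k^h. Then the CWENOZ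 reconstruction achieves the optimal order 2r−1: sup_{x ∈ [−h/2, h/2]} |P_rec^h(x) − u(x)| = O(h^{2r−1}) as h → 0⁺. -/

import Mathlib

/-- Cell average of `u` over the cell `Ω_j = [(j-1/2)h, (j+1/2)h]`. -/
noncomputable def cellAvg (h : ℝ) (j : ℤ) (u : ℝ → ℝ) : ℝ :=
  (1 / h) * ∫ x in (((j : ℝ) - 1/2) * h)..(((j : ℝ) + 1/2) * h), u x

/-- Jiang–Shu smoothness indicator on `Ω_0 = [-h/2, h/2]` for a polynomial of degree ≤ q. -/
noncomputable def JS (q : ℕ) (h : ℝ) (P : Polynomial ℝ) : ℝ :=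
  ∑ l ∈ Finset.Icc 1 q, h ^ (2 * l - 1) *
    ∫ x in (-h/2)..(h/2), (Polynomial.eval x ((⇑Polynomial.derivative)^[l] P)) ^ 2

/-- The symmetric matrix representing the Jiang–Shu indicator as a bilinear form:
for `1 ≤ i ≤ j`, `C i j = ∑_{m=1}^{i} 2^(2m-i-j)/((i-m)!(j-m)!(i+j-2m+1))` if `i+j` is even,
and `0` if `i+j` is odd (extended symmetrically via `min i j`). -/
noncomputable def Cmat (i j : ℕ) : ℝ :=
  if (i + j) % 2 = 0 then
    ∑ m ∈ Finset.Icc 1 (min i j),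
      (2 : ℝ) ^ (2 * (m : ℤ) - i - j) /
        ((Nat.factorial (i - m)) * (Nat.factorial (j - m)) * ((i + j - 2 * m + 1 : ℕ) : ℝ))
  else 0


lemma JS_nonneg (q : ℕ) (h : ℝ) (hh : 0 < h) (P : Polynomial ℝ) : 0 ≤ JS q h P := by
  refine Finset.sum_nonneg (fun l hl => mul_nonneg (by positivity) ?_)
  refine intervalIntegral.integral_nonneg (by linarith) (fun x _ => by positivity)

lemma cellAvg_sub (h : ℝ) (j : ℤ) (f g : ℝ → ℝ) (hf : Continuous f) (hg : Continuous g) :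
    cellAvg h j (fun x => f x - g x) = cellAvg h j f - cellAvg h j g := by
  unfold cellAvg
  rw [intervalIntegral.integral_sub (hf.intervalIntegrable _ _) (hg.intervalIntegrable _ _), mul_sub]

lemma cellAvg_abs_le (h : ℝ) (hh : 0 < h) (j : ℤ) (f : ℝ → ℝ) (B : ℝ)
    (hB : ∀ x ∈ Set.Icc (((j : ℝ) - 1/2) * h) (((j : ℝ) + 1/2) * h), |f x| ≤ B) :
    |cellAvg h j f| ≤ B := by
  have hle : ((j : ℝ) - 1/2) * h ≤ ((j : ℝ) + 1/2) * h := by nlinarith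
  have := intervalIntegral.norm_integral_le_of_norm_le_const (C := B) (f := f)
    (a := ((j : ℝ) - 1/2) * h) (b := ((j : ℝ) + 1/2) * h) (fun x hx => by
      refine hB x ?_
      rw [Set.uIoc_of_le hle] at hx
      exact ⟨le_of_lt hx.1, hx.2⟩)
  unfold cellAvg
  rw [abs_mul]
  have hd : (((j : ℝ) + 1/2) * h - ((j : ℝ) - 1/2) * h) = h := by ring
  rw [Real.norm_eq_abs, hd] at this
  have hB0 : 0 ≤ B := le_trans (abs_nonneg _) (hB _ ⟨le_refl _, hle⟩)
  calc |1/h| * |∫ x in (((j : ℝ) - 1/2) * h)..(((j : ℝ) + 1/2) * h), f x|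
      ≤ |1/h| * (B * |h|) := mul_le_mul_of_nonneg_left this (abs_nonneg _)
    _ = B := by
        rw [abs_of_pos hh, abs_of_pos (by positivity : (0:ℝ) < 1/h)]
        field_simp

lemma cellAvg_scale (h : ℝ) (hh : 0 < h) (j : ℤ) (f : ℝ → ℝ) :
    cellAvg h j f = cellAvg 1 j (fun y => f (h * y)) := by
  unfold cellAvg
  rw [intervalIntegral.integral_comp_mul_left (fun x => f x) (ne_of_gt hh)]
  simp only [smul_eq_mul, mul_one]
  rw [mul_comm h ((j:ℝ) - 1/2), mul_comm h ((j:ℝ) + 1/2)]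
  ring

/-- Taylor remainder bound on [-1,1] for smooth functions. -/
lemma taylor_bound (n : ℕ) : ∀ (u : ℝ → ℝ), ContDiff ℝ ((⊤:ℕ∞) : WithTop ℕ∞) u →
    ∃ C : ℝ, 0 ≤ C ∧ ∀ x ∈ Set.Icc (-1:ℝ) 1,
      |u x - ∑ i ∈ Finset.range n, iteratedDeriv i u 0 / (Nat.factorial i) * x ^ i|
        ≤ C * |x| ^ n := by
  induction n with
  | zero =>
    intro u hu
    obtain ⟨C, hC⟩ := (isCompact_Icc (a := (-1:ℝ)) (b := 1)).exists_bound_of_continuousOn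
      (hu.continuous.continuousOn)
    refine ⟨C, le_trans (norm_nonneg _) (hC 0 (by norm_num)), fun x hx => ?_⟩
    simpa using hC x hx
  | succ n ih =>
    intro u hu
    have hud : Differentiable ℝ u := (contDiff_infty_iff_deriv.mp hu).1
    have hu' : ContDiff ℝ ((⊤:ℕ∞) : WithTop ℕ∞) (deriv u) := (contDiff_infty_iff_deriv.mp hu).2
    obtain ⟨C, hC0, hC⟩ := ih (deriv u) hu'
    refine ⟨C, hC0, fun x hx => ?_⟩
    set g : ℝ → ℝ := fun y =>
      u y - ∑ i ∈ Finset.range (n+1), iteratedDeriv i u 0 / (Nat.factorial i) * y ^ i with hg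
    have hg0 : g 0 = 0 := by
      simp only [hg]
      rw [Finset.sum_eq_single 0]
      · simp [iteratedDeriv_zero]
      · intro b _ hb
        simp [zero_pow hb]
      · simp
    -- derivative of g
    have hgd : ∀ y : ℝ, HasDerivAt g
        (deriv u y - ∑ i ∈ Finset.range n,
          iteratedDeriv i (deriv u) 0 / (Nat.factorial i) * y ^ i) y := by
      intro y
      have h1 : HasDerivAt (fun y : ℝ => ∑ i ∈ Finset.range (n+1),
          iteratedDeriv i u 0 / (Nat.factorial i) * y ^ i)
          (∑ i ∈ Finset.range (n+1),
            iteratedDeriv i u 0 / (Nat.factorial i) * ((i:ℝ) * y ^ (i-1))) y := by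
        refine HasDerivAt.fun_sum (fun i _ => ?_)
        exact (hasDerivAt_pow i y).const_mul _
      have h2 : (∑ i ∈ Finset.range (n+1),
            iteratedDeriv i u 0 / (Nat.factorial i) * ((i:ℝ) * y ^ (i-1)))
          = ∑ i ∈ Finset.range n,
            iteratedDeriv i (deriv u) 0 / (Nat.factorial i) * y ^ i := by
        rw [Finset.sum_range_succ']
        simp only [Nat.cast_zero, zero_mul, mul_zero, add_zero]
        refine Finset.sum_congr rfl (fun i _ => ?_)
        rw [← iteratedDeriv_succ']
        rw [Nat.factorial_succ]
        have : ((i+1 : ℕ) : ℝ) ≠ 0 := by positivity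
        field_simp
        push_cast
        ring
      have := ((hud y).hasDerivAt).sub h1
      rwa [h2] at this
    -- mean value bound on uIcc 0 x
    have key : |g x - g 0| ≤ (C * |x| ^ n) * |x - 0| := by
      have hconv : Convex ℝ (Set.uIcc (0:ℝ) x) := convex_uIcc 0 x
      refine Convex.norm_image_sub_le_of_norm_hasDerivWithin_le
        (f := g) (C := C * |x| ^ n) (f' := fun y => deriv u y - ∑ i ∈ Finset.range n,
          iteratedDeriv i (deriv u) 0 / (Nat.factorial i) * y ^ i)
        (fun y hy => (hgd y).hasDerivWithinAt) (fun y hy => ?_) hconv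
        Set.left_mem_uIcc Set.right_mem_uIcc
      · have hyx : |y| ≤ |x| := by
          rcases Set.mem_uIcc.1 hy with h | h
          · rw [abs_of_nonneg h.1]
            exact le_trans h.2 (le_abs_self x)
          · rw [abs_of_nonpos h.2]
            exact le_trans (neg_le_neg h.1) (neg_le_abs x)
        have hy1 : y ∈ Set.Icc (-1:ℝ) 1 := by
          have : |x| ≤ 1 := abs_le.2 ⟨hx.1, hx.2⟩
          have := hyx.trans this
          exact abs_le.1 this |> fun h => ⟨h.1, h.2⟩
        refine le_trans (hC y hy1) ?_
        exact mul_le_mul_of_nonneg_left (pow_le_pow_left₀ (abs_nonneg _) hyx n) hC0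
    rw [hg0, sub_zero, sub_zero] at key
    calc |u x - ∑ i ∈ Finset.range (n+1), iteratedDeriv i u 0 / (Nat.factorial i) * x ^ i|
        = |g x| := rfl
      _ ≤ C * |x| ^ n * |x| := key
      _ = C * |x| ^ (n+1) := by ring
open Polynomial in
/-- A polynomial of degree ≤ q whose cell averages over q+1 consecutive unit cells vanish
is zero. -/
lemma poly_eq_zero_of_cellAvg (q : ℕ) (a : ℤ) (Q : Polynomial ℝ) (hdeg : Q.natDegree < q + 1)
    (havg : ∀ j ∈ Finset.Icc a (a + (q:ℤ)), cellAvg 1 j (fun y => Q.eval y) = 0) :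
    Q = 0 := by
  classical
  set R : Polynomial ℝ :=
    ∑ i ∈ Finset.range (q+1), C (Q.coeff i / ((i:ℝ)+1)) * X^(i+1) with hRdef
  have hR : derivative R = Q := by
    rw [hRdef, map_sum]
    have hterm : ∀ i ∈ Finset.range (q+1),
        derivative (C (Q.coeff i / ((i:ℝ)+1)) * X^(i+1)) = (monomial i) (Q.coeff i) := by
      intro i _
      rw [derivative_C_mul_X_pow]
      rw [Nat.add_sub_cancel]
      rw [show (Q.coeff i / ((i:ℝ)+1) * ((i+1:ℕ):ℝ)) = Q.coeff i by
        have hne : ((i:ℝ)+1) ≠ 0 := by positivity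
        push_cast; field_simp]
      exact C_mul_X_pow_eq_monomial
    rw [Finset.sum_congr rfl hterm, ← Polynomial.as_sum_range' Q (q+1) hdeg]
  have hRdeg : R.natDegree ≤ q + 1 :=
    Polynomial.natDegree_sum_le_of_forall_le _ _ (fun i hi =>
      le_trans (natDegree_C_mul_X_pow_le _ _) (Finset.mem_range.mp hi))
  have hFTC : ∀ l r : ℝ, (∫ x in l..r, Q.eval x) = R.eval r - R.eval l := by
    intro l r
    have hderiv : (deriv fun y => R.eval y) = fun x => Q.eval x := by
      funext x
      rw [(R.hasDerivAt x).deriv, hR]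
    rw [← hderiv]
    refine intervalIntegral.integral_deriv_eq_sub
      (fun x _ => (R.hasDerivAt x).differentiableAt) ?_
    rw [hderiv]
    exact (Polynomial.continuous_aeval Q).intervalIntegrable _ _
  have heq : ∀ m : ℕ, m ≤ q + 1 → R.eval ((a:ℝ) - 1/2 + m) = R.eval ((a:ℝ) - 1/2) := by
    intro m
    induction m with
    | zero => intro _; norm_num
    | succ m ih =>
      intro hm
      have hm' : m ≤ q := Nat.lt_succ_iff.mp (Nat.lt_of_succ_le hm)
      have hj : (a + (m:ℤ)) ∈ Finset.Icc a (a + (q:ℤ)) := by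
        rw [Finset.mem_Icc]
        refine ⟨by linarith [Int.ofNat_nonneg m], ?_⟩
        have : (m:ℤ) ≤ (q:ℤ) := by exact_mod_cast hm'
        linarith
      have h0 := havg _ hj
      unfold cellAvg at h0
      rw [hFTC] at h0
      have e1 : ((((a + (m:ℤ)) : ℤ):ℝ) + 1/2) * 1 = (a:ℝ) - 1/2 + ((m+1 : ℕ):ℝ) := by
        push_cast; ring
      have e2 : ((((a + (m:ℤ)) : ℤ):ℝ) - 1/2) * 1 = (a:ℝ) - 1/2 + (m:ℝ) := by
        push_cast; ring
      rw [e1, e2] at h0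
      rw [show (1:ℝ)/1 = 1 by norm_num, one_mul] at h0
      have h3 := ih (by omega)
      push_cast at h0 ⊢
      linarith
  set k := R.eval ((a:ℝ) - 1/2) with hk
  set S : Polynomial ℝ := R - C k with hSdef
  have hSzero : S = 0 := by
    refine Polynomial.eq_zero_of_natDegree_lt_card_of_eval_eq_zero S
      (f := fun m : Fin (q+2) => (a:ℝ) - 1/2 + (m:ℕ)) ?_ ?_ ?_
    · intro m m' hmm'
      have : ((m:ℕ):ℝ) = ((m':ℕ):ℝ) := by dsimp at hmm'; linarith
      exact Fin.ext (Nat.cast_injective this)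
    · intro m
      rw [hSdef]
      simp only [eval_sub, eval_C]
      rw [heq (m:ℕ) (Nat.lt_succ_iff.mp m.isLt), hk]
      ring
    · rw [Fintype.card_fin]
      have h5 : S.natDegree ≤ q + 1 := by
        refine le_trans (natDegree_sub_le _ _) ?_
        simp only [natDegree_C, sup_le_iff]
        exact ⟨hRdeg, by omega⟩
      omega
  have hRS : R = S + C k := by rw [hSdef]; ring
  rw [← hR, hRS, hSzero]
  simp

lemma cellAvg_add' (h : ℝ) (j : ℤ) (f g : ℝ → ℝ) (hf : Continuous f) (hg : Continuous g) :
    cellAvg h j (fun x => f x + g x) = cellAvg h j f + cellAvg h j g := by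
  unfold cellAvg
  rw [intervalIntegral.integral_add (hf.intervalIntegrable _ _) (hg.intervalIntegrable _ _),
    mul_add]

lemma cellAvg_const_mul (h : ℝ) (j : ℤ) (r : ℝ) (f : ℝ → ℝ) :
    cellAvg h j (fun x => r * f x) = r * cellAvg h j f := by
  unfold cellAvg
  rw [intervalIntegral.integral_const_mul]
  ring

open Polynomial in
/-- Bounded inverse for reconstruction from cell averages at scale 1. -/
lemma stencil_bound (q : ℕ) (a : ℤ) :
    ∃ K : ℝ, 0 < K ∧ ∀ (Q : Polynomial ℝ), Q.natDegree ≤ q → ∀ B : ℝ,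
      (∀ j ∈ Finset.Icc a (a + (q:ℤ)), |cellAvg 1 j (fun y => Q.eval y)| ≤ B) →
      ∀ x : ℝ, |x| ≤ 1 → |Q.eval x| ≤ K * B := by
  classical
  set n := q + 1 with hn
  set fc : (Fin n → ℝ) → ℝ → ℝ := fun c x => ∑ i : Fin n, c i * x ^ (i:ℕ) with hfc
  have hfc_cont : ∀ c, Continuous (fc c) := fun c =>
    continuous_finset_sum _ (fun i _ => continuous_const.mul (continuous_pow (i:ℕ)))
  set pc : (Fin n → ℝ) → Polynomial ℝ :=
    fun c => ∑ i : Fin n, Polynomial.C (c i) * Polynomial.X ^ (i:ℕ) with hpc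
  have heval : ∀ c x, (pc c).eval x = fc c x := by
    intro c x
    simp [hpc, hfc, Polynomial.eval_finset_sum]
  have hcoeff : ∀ c (i : Fin n), (pc c).coeff (i:ℕ) = c i := by
    intro c i
    rw [hpc]
    rw [Polynomial.finset_sum_coeff]
    have hterm : ∀ x : Fin n,
        (Polynomial.C (c x) * Polynomial.X ^ (x:ℕ)).coeff (i:ℕ)
          = if x = i then c x else 0 := by
      intro x
      rw [Polynomial.coeff_C_mul, Polynomial.coeff_X_pow]
      by_cases hxi : x = i
      · subst hxi; simp
      · rw [if_neg hxi, if_neg (fun hh => hxi (Fin.ext hh.symm)), mul_zero]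
    rw [Finset.sum_congr rfl (fun x _ => hterm x), Finset.sum_ite_eq']
    simp
  -- the linear map from coefficients to cell averages
  set E : (Fin n → ℝ) →ₗ[ℝ] (Fin n → ℝ) :=
    { toFun := fun c i => cellAvg 1 (a + ((i:ℕ):ℤ)) (fc c),
      map_add' := by
        intro c c'
        funext i
        have hadd : fc (c + c') = fun x => fc c x + fc c' x := by
          funext x
          simp [hfc, add_mul, Finset.sum_add_distrib]
        simp only [hadd]
        exact cellAvg_add' _ _ _ _ (hfc_cont c) (hfc_cont c')
      map_smul' := by
        intro r c
        funext i
        have hsmul : fc (r • c) = fun x => r * fc c x := by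
          funext x
          simp [hfc, Finset.mul_sum]
          exact Finset.sum_congr rfl (fun i _ => by ring)
        simp only [hsmul, RingHom.id_apply]
        exact cellAvg_const_mul _ _ _ _ } with hE
  have hEapp : ∀ c i, E c i = cellAvg 1 (a + ((i:ℕ):ℤ)) (fc c) := fun c i => rfl
  have hEinj : Function.Injective E := by
    rw [injective_iff_map_eq_zero]
    intro c hc
    have hpc0 : pc c = 0 := by
      refine poly_eq_zero_of_cellAvg q a (pc c) ?_ ?_
      · have : (pc c).natDegree ≤ q :=
          Polynomial.natDegree_sum_le_of_forall_le _ _ (fun i _ =>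
            le_trans (Polynomial.natDegree_C_mul_X_pow_le _ _) (Nat.lt_succ_iff.mp i.isLt))
        omega
      · intro j hj
        rw [Finset.mem_Icc] at hj
        have hja : 0 ≤ j - a := by linarith [hj.1]
        set i : ℕ := (j - a).toNat with hi
        have hilt : i < n := by
          have : (j - a) ≤ (q:ℤ) := by linarith [hj.2]
          omega
        have hji : j = a + ((i:ℕ):ℤ) := by omega
        have := congrFun hc ⟨i, hilt⟩
        rw [hEapp] at this
        simp only [Pi.zero_apply] at this
        rw [hji]
        have hfeq : (fun y => (pc c).eval y) = fc c := funext (heval c)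
        rw [hfeq]
        exact this
    funext i
    rw [← hcoeff c i, hpc0]
    simp
  have hEsurj : Function.Surjective E := LinearMap.injective_iff_surjective.mp hEinj
  set Eeq : (Fin n → ℝ) ≃ₗ[ℝ] (Fin n → ℝ) :=
    LinearEquiv.ofBijective E ⟨hEinj, hEsurj⟩ with hEeq
  set CLM : (Fin n → ℝ) →L[ℝ] (Fin n → ℝ) :=
    LinearMap.toContinuousLinearMap (Eeq.symm : (Fin n → ℝ) →ₗ[ℝ] (Fin n → ℝ)) with hCLM
  refine ⟨(n:ℝ) * (‖CLM‖ + 1), by positivity, ?_⟩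
  intro Q hQdeg B hB x hx
  set c : Fin n → ℝ := fun i => Q.coeff (i:ℕ) with hcdef
  have hQc : ∀ y, Q.eval y = fc c y := by
    intro y
    rw [Polynomial.eval_eq_sum_range' (lt_of_le_of_lt hQdeg (Nat.lt_succ_self q)) y,
      Finset.sum_range]
  have hEc : ∀ i : Fin n, |E c i| ≤ B := by
    intro i
    rw [hEapp]
    have hfeq : fc c = fun y => Q.eval y := funext (fun y => (hQc y).symm)
    rw [hfeq]
    refine hB _ ?_
    rw [Finset.mem_Icc]
    constructor
    · linarith [Int.ofNat_nonneg (i:ℕ)]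
    · have : ((i:ℕ):ℤ) ≤ (q:ℤ) := by exact_mod_cast Nat.lt_succ_iff.mp i.isLt
      linarith
  have hB0 : 0 ≤ B := le_trans (abs_nonneg _) (hEc ⟨0, Nat.succ_pos q⟩)
  have hnormE : ‖E c‖ ≤ B := by
    rw [pi_norm_le_iff_of_nonneg hB0]
    intro i
    rw [Real.norm_eq_abs]
    exact hEc i
  have hcnorm : ‖c‖ ≤ ‖CLM‖ * B := by
    have h1 : CLM (E c) = c := by
      show Eeq.symm (E c) = c
      have : E c = Eeq c := rfl
      rw [this, LinearEquiv.symm_apply_apply]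
    calc ‖c‖ = ‖CLM (E c)‖ := by rw [h1]
      _ ≤ ‖CLM‖ * ‖E c‖ := CLM.le_opNorm _
      _ ≤ ‖CLM‖ * B := mul_le_mul_of_nonneg_left hnormE (norm_nonneg _)
  have hsumbound : |Q.eval x| ≤ (n:ℝ) * ‖c‖ := by
    rw [hQc x, hfc]
    refine le_trans (Finset.abs_sum_le_sum_abs _ _) ?_
    have hterm : ∀ i : Fin n, |c i * x ^ (i:ℕ)| ≤ ‖c‖ := by
      intro i
      rw [abs_mul, abs_pow]
      calc |c i| * |x| ^ (i:ℕ) ≤ |c i| * 1 := by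
            refine mul_le_mul_of_nonneg_left (pow_le_one₀ (abs_nonneg _) hx) (abs_nonneg _)
        _ = |c i| := mul_one _
        _ ≤ ‖c‖ := by rw [← Real.norm_eq_abs]; exact norm_le_pi_norm c i
    refine le_trans (Finset.sum_le_sum (fun i _ => hterm i)) ?_
    rw [Finset.sum_const, Finset.card_univ, Fintype.card_fin]
    simp [nsmul_eq_mul]
  calc |Q.eval x| ≤ (n:ℝ) * ‖c‖ := hsumbound
    _ ≤ (n:ℝ) * (‖CLM‖ * B) := by
        refine mul_le_mul_of_nonneg_left hcnorm (by positivity)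
    _ ≤ (n:ℝ) * ((‖CLM‖ + 1) * B) := by
        refine mul_le_mul_of_nonneg_left (mul_le_mul_of_nonneg_right (by linarith) hB0)
          (by positivity)
    _ = (n:ℝ) * (‖CLM‖ + 1) * B := by ring

open Polynomial in
/-- Polynomial reconstructions from cell averages of a smooth function converge with
order q+1 on the central cell. -/
lemma approx_lemma (u : ℝ → ℝ) (hu : ContDiff ℝ ((⊤:ℕ∞) : WithTop ℕ∞) u) (q : ℕ) (a : ℤ)
    (Q : ℝ → Polynomial ℝ)
    (hQ : ∀ h : ℝ, 0 < h → (Q h).natDegree ≤ q ∧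
      ∀ j ∈ Finset.Icc a (a + (q:ℤ)), cellAvg h j (fun x => (Q h).eval x) = cellAvg h j u) :
    ∃ C : ℝ, 0 < C ∧ ∃ h1 : ℝ, 0 < h1 ∧ ∀ h : ℝ, 0 < h → h < h1 →
      ∀ x ∈ Set.Icc (-h/2) (h/2), |(Q h).eval x - u x| ≤ C * h ^ (q+1) := by
  classical
  obtain ⟨C1, hC10, hC1⟩ := taylor_bound (q+1) u hu
  set T : Polynomial ℝ :=
    ∑ i ∈ Finset.range (q+1), C (iteratedDeriv i u 0 / (Nat.factorial i)) * X ^ i with hTdef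
  have hTeval : ∀ x : ℝ, T.eval x
      = ∑ i ∈ Finset.range (q+1), iteratedDeriv i u 0 / (Nat.factorial i) * x ^ i := by
    intro x
    rw [hTdef, Polynomial.eval_finset_sum]
    exact Finset.sum_congr rfl (fun i _ => by simp)
  have hTu : ∀ x ∈ Set.Icc (-1:ℝ) 1, |u x - T.eval x| ≤ C1 * |x| ^ (q+1) := by
    intro x hx
    rw [hTeval]
    exact hC1 x hx
  have hTdeg : T.natDegree ≤ q :=
    Polynomial.natDegree_sum_le_of_forall_le _ _ (fun i hi =>
      le_trans (natDegree_C_mul_X_pow_le _ _) (Nat.lt_succ_iff.mp (Finset.mem_range.mp hi)))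
  obtain ⟨K, hK0, hK⟩ := stencil_bound q a
  set M : ℝ := |(a:ℝ)| + q + 1 with hM
  have hM1 : 1 ≤ M := by
    rw [hM]
    have h1 := abs_nonneg ((a:ℤ):ℝ)
    have h2 : (0:ℝ) ≤ (q:ℝ) := Nat.cast_nonneg q
    linarith
  have hMpos : 0 < M := lt_of_lt_of_le one_pos hM1
  have hpcont : ∀ p : Polynomial ℝ, Continuous fun x => p.eval x := fun p =>
    Polynomial.continuous_aeval p
  have hC0big : 0 < K * C1 * M^(q+1) + C1 + 1 := by
    have h1 : 0 ≤ K * C1 * M^(q+1) :=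
      mul_nonneg (mul_nonneg hK0.le hC10) (pow_nonneg hMpos.le _)
    linarith
  refine ⟨K * C1 * M^(q+1) + C1 + 1, hC0big, 1 / M, one_div_pos.mpr hMpos, ?_⟩
  intro h hh hhM x hx
  have hMh1 : M * h ≤ 1 := by
    rw [div_eq_mul_inv, one_mul] at hhM
    calc M * h ≤ M * M⁻¹ := by
          refine mul_le_mul_of_nonneg_left (le_of_lt hhM) (by positivity)
      _ = 1 := by field_simp
  obtain ⟨hQdeg, hQavg⟩ := hQ h hh
  set D : Polynomial ℝ := Q h - T with hD
  have hDdeg : D.natDegree ≤ q := le_trans (natDegree_sub_le _ _) (max_le hQdeg hTdeg)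
  set Dh : Polynomial ℝ := D.comp (C h * X) with hDh
  have hDh_ev : ∀ y : ℝ, Dh.eval y = D.eval (h * y) := by
    intro y
    rw [hDh, Polynomial.eval_comp]
    simp
  have hDhdeg : Dh.natDegree ≤ q := by
    refine le_trans (Polynomial.natDegree_comp_le) ?_
    calc D.natDegree * (C h * X).natDegree ≤ D.natDegree * 1 := by
          refine Nat.mul_le_mul_left _ ?_
          simpa using natDegree_C_mul_X_pow_le h 1
      _ ≤ q := by simpa using hDdeg
  -- bound on cell averages of Dh at scale 1
  have havgDh : ∀ j ∈ Finset.Icc a (a + (q:ℤ)),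
      |cellAvg 1 j (fun y => Dh.eval y)| ≤ C1 * (M * h)^(q+1) := by
    intro j hj
    rw [Finset.mem_Icc] at hj
    have hfe : (fun y => Dh.eval y) = fun y => D.eval (h * y) := funext hDh_ev
    rw [hfe, ← cellAvg_scale h hh j (fun x => D.eval x)]
    have hsplit : (fun x => D.eval x) = fun x => (Q h).eval x - T.eval x := by
      funext x
      rw [hD, Polynomial.eval_sub]
    rw [hsplit, cellAvg_sub h j _ _ (hpcont (Q h)) (hpcont T), hQavg j (by
      rw [Finset.mem_Icc]; exact hj)]
    rw [← cellAvg_sub h j u _ (hu.continuous) (hpcont T)]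
    refine cellAvg_abs_le h hh j _ _ ?_
    intro y hy
    have hjb : |(j:ℝ)| ≤ |(a:ℝ)| + q := by
      have h1' : (a:ℝ) ≤ (j:ℝ) := by exact_mod_cast hj.1
      have h2' : (j:ℝ) ≤ (a:ℝ) + q := by exact_mod_cast hj.2
      rw [abs_le]
      constructor
      · have := neg_abs_le (a:ℝ); linarith
      · have := le_abs_self (a:ℝ); linarith
    rw [Set.mem_Icc] at hy
    obtain ⟨hyl, hyr⟩ := hy
    have hyabs : |y| ≤ M * h := by
      rw [abs_le] at hjb ⊢
      constructor
      · have h5 : -(M * h) ≤ ((j:ℝ) - 1/2) * h := by nlinarith [hjb.1, hjb.2]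
        exact le_trans h5 hyl
      · have h5 : ((j:ℝ) + 1/2) * h ≤ M * h := by nlinarith [hjb.1, hjb.2]
        exact le_trans hyr h5
    have hy1 : y ∈ Set.Icc (-1:ℝ) 1 := by
      rw [Set.mem_Icc]
      exact abs_le.mp (le_trans hyabs hMh1)
    refine le_trans (hTu y hy1) ?_
    refine mul_le_mul_of_nonneg_left ?_ hC10
    exact pow_le_pow_left₀ (abs_nonneg _) hyabs _
  -- conclude via stencil bound
  rw [Set.mem_Icc] at hx
  have hxh : |x| ≤ h / 2 := by
    rw [abs_le]
    exact ⟨by linarith [hx.1], hx.2⟩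
  have hxy : |x / h| ≤ 1 := by
    rw [abs_div, abs_of_pos hh, div_le_one hh]
    linarith
  have hDx : |D.eval x| ≤ K * (C1 * (M * h)^(q+1)) := by
    have := hK Dh hDhdeg (C1 * (M * h)^(q+1)) havgDh (x / h) hxy
    rwa [hDh_ev, mul_div_cancel₀ x (ne_of_gt hh)] at this
  have hx1 : x ∈ Set.Icc (-1:ℝ) 1 := by
    rw [Set.mem_Icc]
    have hh1 : h ≤ 1 := by nlinarith
    rw [abs_le] at hxh
    constructor <;> [linarith [hxh.1]; linarith [hxh.2]]
  have hTx : |u x - T.eval x| ≤ C1 * h^(q+1) := by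
    refine le_trans (hTu x hx1) ?_
    refine mul_le_mul_of_nonneg_left ?_ hC10
    refine pow_le_pow_left₀ (abs_nonneg _) ?_ _
    calc |x| ≤ h / 2 := hxh
      _ ≤ h := by linarith
  calc |(Q h).eval x - u x|
      = |D.eval x + (T.eval x - u x)| := by
        rw [hD]; congr 1; rw [Polynomial.eval_sub]; ring
    _ ≤ |D.eval x| + |T.eval x - u x| := abs_add_le _ _
    _ = |D.eval x| + |u x - T.eval x| := by rw [abs_sub_comm]
    _ ≤ K * (C1 * (M * h)^(q+1)) + C1 * h^(q+1) := add_le_add hDx hTx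
    _ = (K * C1 * M^(q+1) + C1) * h^(q+1) := by rw [mul_pow]; ring
    _ ≤ (K * C1 * M^(q+1) + C1 + 1) * h^(q+1) := by
        refine mul_le_mul_of_nonneg_right (by linarith) (by positivity)

lemma sum_range_succ_split {M : Type*} [AddCommMonoid M] (f : ℕ → M) (r : ℕ) :
    ∑ k ∈ Finset.range (r+1), f k = f 0 + ∑ k ∈ Finset.Icc 1 r, f k := by
  have h : Finset.range (r+1) = insert 0 (Finset.Icc 1 r) := by
    ext m
    simp only [Finset.mem_range, Finset.mem_insert, Finset.mem_Icc]
    omega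
  rw [h, Finset.sum_insert (by simp)]


set_option maxHeartbeats 2000000 in
/-- optimal convergence of the CWENOZ reconstruction, regardless of critical
points: if `τ(h) = O(h^s)` and `ε(h) ≥ c h^p` with `0 < p ≤ s - (r-1)/t`, then the CWENOZ
reconstruction polynomial approximates `u` with the optimal order `2r-1` on the central cell. -/
theorem cwenoz_optimal_convergence
    (r : ℕ) (hr : 2 ≤ r) (t : ℝ) (ht : 1 ≤ t)
    (d : ℕ → ℝ) (hd : ∀ k ≤ r, d k ∈ Set.Ioo (0 : ℝ) 1)
    (hdsum : ∑ k ∈ Finset.range (r + 1), d k = 1)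
    (u : ℝ → ℝ) (hu : ContDiff ℝ (⊤ : ℕ∞) u)
    (Popt : ℝ → Polynomial ℝ)
    (hPopt : ∀ h : ℝ, 0 < h → (Popt h).natDegree ≤ 2 * r - 2 ∧
      ∀ j ∈ Finset.Icc (-(r : ℤ) + 1) ((r : ℤ) - 1),
        cellAvg h j (fun x => (Popt h).eval x) = cellAvg h j u)
    (P : ℕ → ℝ → Polynomial ℝ)
    (hP : ∀ k, 1 ≤ k → k ≤ r → ∀ h : ℝ, 0 < h → (P k h).natDegree ≤ r - 1 ∧
      ∀ j ∈ Finset.Icc ((k : ℤ) - r) ((k : ℤ) - 1),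
        cellAvg h j (fun x => (P k h).eval x) = cellAvg h j u)
    (hP0 : ∀ h : ℝ, 0 < h →
      P 0 h = (d 0)⁻¹ • (Popt h - ∑ k ∈ Finset.Icc 1 r, d k • P k h))
    (h0 s : ℝ) (hh0 : 0 < h0) (hs : 0 < s)
    (τ : ℝ → ℝ) (hτnn : ∀ h : ℝ, 0 < h → h < h0 → 0 ≤ τ h)
    (hτO : ∃ Cτ > 0, ∀ h : ℝ, 0 < h → h < h0 → |τ h| ≤ Cτ * h ^ s)
    (ε : ℝ → ℝ) (hεpos : ∀ h : ℝ, 0 < h → h < h0 → 0 < ε h)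
    (c p : ℝ) (hc : 0 < c) (hp : 0 < p) (hps : p ≤ s - ((r : ℝ) - 1) / t)
    (hεlb : ∀ h : ℝ, 0 < h → h < h0 → c * h ^ p ≤ ε h)
    (α ω : ℕ → ℝ → ℝ)
    (hα : ∀ k ≤ r, ∀ h : ℝ, 0 < h → h < h0 →
      α k h = d k * (1 + (τ h / (JS (2 * r - 2) h (P k h) + ε h)) ^ t))
    (hω : ∀ k ≤ r, ∀ h : ℝ, 0 < h → h < h0 →
      ω k h = α k h / ∑ i ∈ Finset.range (r + 1), α i h)
    (Prec : ℝ → Polynomial ℝ)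
    (hPrec : ∀ h : ℝ, 0 < h → h < h0 →
      Prec h = ∑ k ∈ Finset.range (r + 1), ω k h • P k h) :
    ∃ C > 0, ∃ h1 > 0, ∀ h : ℝ, 0 < h → h < h1 →
      ∀ x ∈ Set.Icc (-h/2) (h/2), |(Prec h).eval x - u x| ≤ C * h ^ (2 * r - 1) := by
  classical
  obtain ⟨Cτ, hCτ, hτb⟩ := hτO
  have hu' : ContDiff ℝ ((⊤:ℕ∞) : WithTop ℕ∞) u := hu.of_le (by simp)
  have htpos : 0 < t := lt_of_lt_of_le one_pos ht
  have hd0 := hd 0 (Nat.zero_le r)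
  have hd0pos : 0 < d 0 := hd0.1
  have hd0ne : d 0 ≠ 0 := ne_of_gt hd0pos
  -- uniform bound for the optimal polynomial
  obtain ⟨Co, hCo, ho, hho, hbo⟩ :=
    approx_lemma u hu' (2*r-2) (-(r:ℤ)+1) Popt (by
      intro h hh
      refine ⟨(hPopt h hh).1, fun j hj => (hPopt h hh).2 j ?_⟩
      rw [Finset.mem_Icc] at hj ⊢
      omega)
  have hbo' : ∀ h : ℝ, 0 < h → h < ho → ∀ x ∈ Set.Icc (-h/2) (h/2),
      |(Popt h).eval x - u x| ≤ Co * h ^ (2*r-1) := by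
    intro h hh hlt x hx
    have := hbo h hh hlt x hx
    rwa [show 2*r-2+1 = 2*r-1 from by omega] at this
  -- uniform bounds for the lower-degree polynomials
  have hPkB : ∀ k : ℕ, 1 ≤ k → k ≤ r → ∃ C : ℝ, 0 < C ∧ ∃ h1 : ℝ, 0 < h1 ∧
      ∀ h : ℝ, 0 < h → h < h1 → ∀ x ∈ Set.Icc (-h/2) (h/2),
        |(P k h).eval x - u x| ≤ C * h ^ r := by
    intro k hk1 hkr
    obtain ⟨C, hC, h1, hh1, hb⟩ :=
      approx_lemma u hu' (r-1) ((k:ℤ)-r) (P k) (by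
        intro h hh
        refine ⟨(hP k hk1 hkr h hh).1, fun j hj => (hP k hk1 hkr h hh).2 j ?_⟩
        rw [Finset.mem_Icc] at hj ⊢
        omega)
    refine ⟨C, hC, h1, hh1, fun h hh hlt x hx => ?_⟩
    have := hb h hh hlt x hx
    rwa [show r-1+1 = r from by omega] at this
  choose! CK hCK hK1 hhK1 hbK using hPkB
  have hne : (Finset.Icc 1 r).Nonempty := ⟨1, by rw [Finset.mem_Icc]; omega⟩
  set C2 : ℝ := (∑ k ∈ Finset.Icc 1 r, |CK k|) + 1 with hC2def
  have hC2pos : 0 < C2 := by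
    have : 0 ≤ ∑ k ∈ Finset.Icc 1 r, |CK k| :=
      Finset.sum_nonneg (fun k _ => abs_nonneg _)
    rw [hC2def]; linarith
  have hCKle : ∀ k ∈ Finset.Icc 1 r, CK k ≤ C2 := by
    intro k hk
    have h1 : CK k ≤ |CK k| := le_abs_self _
    have h2 : |CK k| ≤ ∑ j ∈ Finset.Icc 1 r, |CK j| :=
      Finset.single_le_sum (f := fun j => |CK j|) (fun j _ => abs_nonneg _) hk
    rw [hC2def]; linarith
  set h2 : ℝ := (Finset.Icc 1 r).inf' hne hK1 with hh2def
  have hh2pos : 0 < h2 := by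
    rw [hh2def, Finset.lt_inf'_iff]
    intro k hk
    rw [Finset.mem_Icc] at hk
    exact hhK1 k hk.1 hk.2
  have hPk' : ∀ k : ℕ, 1 ≤ k → k ≤ r → ∀ h : ℝ, 0 < h → h < h2 →
      ∀ x ∈ Set.Icc (-h/2) (h/2), |(P k h).eval x - u x| ≤ C2 * h ^ r := by
    intro k hk1 hkr h hh hlt x hx
    have hlt' : h < hK1 k := lt_of_lt_of_le hlt (by
      rw [hh2def]; exact Finset.inf'_le _ (Finset.mem_Icc.mpr ⟨hk1, hkr⟩))
    refine le_trans (hbK k hk1 hkr h hh hlt' x hx) ?_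
    exact mul_le_mul_of_nonneg_right (hCKle k (Finset.mem_Icc.mpr ⟨hk1, hkr⟩))
      (by positivity)
  -- bound for P 0
  set h3 : ℝ := min ho (min h2 1) with hh3def
  have hh3pos : 0 < h3 := by
    rw [hh3def]
    exact lt_min hho (lt_min hh2pos one_pos)
  have hsum1 : ∑ k ∈ Finset.Icc 1 r, d k = 1 - d 0 := by
    rw [sum_range_succ_split d r] at hdsum
    linarith
  have hP0B : ∀ h : ℝ, 0 < h → h < h3 → ∀ x ∈ Set.Icc (-h/2) (h/2),
      |(P 0 h).eval x - u x| ≤ ((d 0)⁻¹ * (Co + C2)) * h ^ r := by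
    intro h hh hlt x hx
    have hho' : h < ho := lt_of_lt_of_le hlt (by rw [hh3def]; exact min_le_left _ _)
    have hhh2 : h < h2 := lt_of_lt_of_le hlt (by
      rw [hh3def]; exact le_trans (min_le_right _ _) (min_le_left _ _))
    have hh1 : h < 1 := lt_of_lt_of_le hlt (by
      rw [hh3def]; exact le_trans (min_le_right _ _) (min_le_right _ _))
    have hid0 : d 0 * (P 0 h).eval x
        = (Popt h).eval x - ∑ k ∈ Finset.Icc 1 r, d k * (P k h).eval x := by
      have e := hP0 h hh
      have e2 : d 0 • P 0 h = Popt h - ∑ k ∈ Finset.Icc 1 r, d k • P k h := by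
        rw [e, smul_smul, mul_inv_cancel₀ hd0ne, one_smul]
      have e3 := congrArg (fun q : Polynomial ℝ => q.eval x) e2
      simp only [Polynomial.eval_smul, Polynomial.eval_sub, Polynomial.eval_finset_sum,
        smul_eq_mul] at e3
      exact e3
    have hid : d 0 * ((P 0 h).eval x - u x)
        = ((Popt h).eval x - u x)
          - ∑ k ∈ Finset.Icc 1 r, d k * ((P k h).eval x - u x) := by
      have hexp : ∑ k ∈ Finset.Icc 1 r, d k * ((P k h).eval x - u x)
          = (∑ k ∈ Finset.Icc 1 r, d k * (P k h).eval x)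
            - (∑ k ∈ Finset.Icc 1 r, d k) * u x := by
        rw [Finset.sum_mul, ← Finset.sum_sub_distrib]
        exact Finset.sum_congr rfl (fun k _ => by ring)
      rw [mul_sub, hid0, hexp, hsum1]
      ring
    have hpow : h ^ (2*r-1) ≤ h ^ r := by
      refine pow_le_pow_of_le_one hh.le hh1.le ?_
      omega
    have habs : |d 0 * ((P 0 h).eval x - u x)| ≤ (Co + C2) * h ^ r := by
      rw [hid]
      refine le_trans (le_trans (le_of_eq (by rw [sub_eq_add_neg]))
        ((abs_add_le _ _).trans (le_of_eq (by rw [abs_neg])))) ?_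
      have hb1 : |(Popt h).eval x - u x| ≤ Co * h ^ r := by
        refine le_trans (hbo' h hh hho' x hx) ?_
        exact mul_le_mul_of_nonneg_left hpow hCo.le
      have hb2 : |∑ k ∈ Finset.Icc 1 r, d k * ((P k h).eval x - u x)| ≤ C2 * h ^ r := by
        refine le_trans (Finset.abs_sum_le_sum_abs _ _) ?_
        have hterm : ∀ k ∈ Finset.Icc 1 r,
            |d k * ((P k h).eval x - u x)| ≤ d k * (C2 * h ^ r) := by
          intro k hk
          rw [Finset.mem_Icc] at hk
          have hdk := hd k hk.2
          rw [abs_mul, abs_of_pos hdk.1]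
          exact mul_le_mul_of_nonneg_left (hPk' k hk.1 hk.2 h hh hhh2 x hx) hdk.1.le
        refine le_trans (Finset.sum_le_sum hterm) ?_
        rw [← Finset.sum_mul, hsum1]
        have : (0:ℝ) ≤ C2 * h ^ r := by positivity
        nlinarith [hd0.2]
      calc |(Popt h).eval x - u x| + |∑ k ∈ Finset.Icc 1 r, d k * ((P k h).eval x - u x)|
          ≤ Co * h ^ r + C2 * h ^ r := add_le_add hb1 hb2
        _ = (Co + C2) * h ^ r := by ring
    rw [abs_mul, abs_of_pos hd0pos] at habs
    have := mul_le_mul_of_nonneg_left habs (inv_nonneg.mpr hd0pos.le)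
    rw [← mul_assoc, inv_mul_cancel₀ hd0ne, one_mul] at this
    linarith [this]
  -- combined bound for all P k
  set C3 : ℝ := C2 + (d 0)⁻¹ * (Co + C2) with hC3def
  have hC3pos : 0 < C3 := by
    have : 0 < (d 0)⁻¹ * (Co + C2) := by positivity
    rw [hC3def]; linarith
  have hPall : ∀ k ≤ r, ∀ h : ℝ, 0 < h → h < h3 → ∀ x ∈ Set.Icc (-h/2) (h/2),
      |(P k h).eval x - u x| ≤ C3 * h ^ r := by
    intro k hkr h hh hlt x hx
    have hhr : (0:ℝ) ≤ h ^ r := by positivity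
    rcases Nat.eq_zero_or_pos k with hk0 | hkpos
    · subst hk0
      refine le_trans (hP0B h hh hlt x hx) ?_
      refine mul_le_mul_of_nonneg_right ?_ hhr
      rw [hC3def]; linarith
    · have hhh2 : h < h2 := lt_of_lt_of_le hlt (by
        rw [hh3def]; exact le_trans (min_le_right _ _) (min_le_left _ _))
      refine le_trans (hPk' k hkpos hkr h hh hhh2 x hx) ?_
      refine mul_le_mul_of_nonneg_right ?_ hhr
      have : 0 < (d 0)⁻¹ * (Co + C2) := by positivity
      rw [hC3def]; linarith
  -- weight deviation bound
  set Mz : ℝ := (Cτ / c) ^ t with hMzdef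
  have hMzpos : 0 < Mz := Real.rpow_pos_of_pos (div_pos hCτ hc) t
  have hδbound : ∀ h : ℝ, 0 < h → h < h0 → h < 1 → ∀ k, k ≤ r →
      0 ≤ (τ h / (JS (2 * r - 2) h (P k h) + ε h)) ^ t ∧
      (τ h / (JS (2 * r - 2) h (P k h) + ε h)) ^ t ≤ Mz * h ^ (r-1) := by
    intro h hh hlt h1lt k _
    have hJS := JS_nonneg (2*r-2) h hh (P k h)
    have hεp := hεpos h hh hlt
    have hden : 0 < JS (2 * r - 2) h (P k h) + ε h := by linarith
    have hτ0 := hτnn h hh hlt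
    have hbase : 0 ≤ τ h / (JS (2 * r - 2) h (P k h) + ε h) :=
      div_nonneg hτ0 hden.le
    refine ⟨Real.rpow_nonneg hbase t, ?_⟩
    have hεl := hεlb h hh hlt
    have hhprp : (0:ℝ) < h ^ p := Real.rpow_pos_of_pos hh p
    have hhsrp : (0:ℝ) < h ^ s := Real.rpow_pos_of_pos hh s
    have hhp : (0:ℝ) < c * h ^ p := by positivity
    have hbase2 : τ h / (JS (2 * r - 2) h (P k h) + ε h) ≤ (Cτ / c) * h ^ (s - p) := by
      have step1 : τ h / (JS (2 * r - 2) h (P k h) + ε h) ≤ (Cτ * h ^ s) / (c * h ^ p) := by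
        refine div_le_div₀ (by positivity) ?_ hhp (by linarith)
        exact le_trans (le_abs_self _) (hτb h hh hlt)
      refine le_trans step1 (le_of_eq ?_)
      rw [Real.rpow_sub hh]
      field_simp
    have hexp : (r:ℝ) - 1 ≤ (s - p) * t := by
      have h1 : ((r:ℝ) - 1) / t ≤ s - p := by linarith
      calc (r:ℝ) - 1 = (((r:ℝ) - 1) / t) * t := by field_simp
        _ ≤ (s - p) * t := mul_le_mul_of_nonneg_right h1 htpos.le
    have hcast : ((r:ℝ) - 1) = ((r - 1 : ℕ) : ℝ) := by
      rw [Nat.cast_sub (by omega : 1 ≤ r)]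
      norm_num
    calc (τ h / (JS (2 * r - 2) h (P k h) + ε h)) ^ t
        ≤ ((Cτ / c) * h ^ (s - p)) ^ t := Real.rpow_le_rpow hbase hbase2 htpos.le
      _ = Mz * (h ^ (s - p)) ^ t := by
          rw [Real.mul_rpow (div_pos hCτ hc).le (Real.rpow_nonneg hh.le _)]
      _ = Mz * h ^ ((s - p) * t) := by rw [← Real.rpow_mul hh.le]
      _ ≤ Mz * h ^ ((r:ℝ) - 1) := by
          refine mul_le_mul_of_nonneg_left ?_ hMzpos.le
          exact Real.rpow_le_rpow_of_exponent_ge hh h1lt.le hexp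
      _ = Mz * h ^ (r - 1) := by rw [hcast, Real.rpow_natCast]
  -- weight estimates
  have hweights : ∀ h : ℝ, 0 < h → h < h0 → h < 1 →
      (∑ i ∈ Finset.range (r + 1), ω i h = 1) ∧
      ∀ k, k ≤ r → |ω k h - d k| ≤ Mz * h ^ (r-1) := by
    intro h hh hlt h1lt
    obtain ⟨δ, hδ, hαeq⟩ : ∃ δ : ℕ → ℝ,
        (∀ k, k ≤ r → 0 ≤ δ k ∧ δ k ≤ Mz * h ^ (r-1)) ∧
        (∀ k, k ≤ r → α k h = d k * (1 + δ k)) :=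
      ⟨fun k => (τ h / (JS (2 * r - 2) h (P k h) + ε h)) ^ t,
        fun k hk => hδbound h hh hlt h1lt k hk,
        fun k hk => hα k hk h hh hlt⟩
    set S := ∑ i ∈ Finset.range (r + 1), α i h with hSdef
    have hSeq : S = ∑ i ∈ Finset.range (r + 1), d i * (1 + δ i) :=
      Finset.sum_congr rfl (fun i hi =>
        hαeq i (Nat.lt_succ_iff.mp (Finset.mem_range.mp hi)))
    have hS1 : 1 ≤ S := by
      rw [hSeq, ← hdsum]
      refine Finset.sum_le_sum (fun i hi => ?_)
      have hik := Nat.lt_succ_iff.mp (Finset.mem_range.mp hi)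
      have hdi := (hd i hik).1
      have hδi := (hδ i hik).1
      nlinarith
    have hSub : S ≤ 1 + Mz * h ^ (r-1) := by
      rw [hSeq]
      have hstep : ∑ i ∈ Finset.range (r + 1), d i * (1 + δ i)
          ≤ ∑ i ∈ Finset.range (r + 1), (d i + d i * (Mz * h ^ (r-1))) := by
        refine Finset.sum_le_sum (fun i hi => ?_)
        have hik := Nat.lt_succ_iff.mp (Finset.mem_range.mp hi)
        have hdi := (hd i hik).1
        have hδi := (hδ i hik).2
        nlinarith
      refine le_trans hstep (le_of_eq ?_)
      rw [Finset.sum_add_distrib, ← Finset.sum_mul, hdsum]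
      ring
    have hSpos : 0 < S := lt_of_lt_of_le one_pos hS1
    constructor
    · have : ∑ i ∈ Finset.range (r + 1), ω i h
          = ∑ i ∈ Finset.range (r + 1), α i h / S :=
        Finset.sum_congr rfl (fun i hi =>
          hω i (Nat.lt_succ_iff.mp (Finset.mem_range.mp hi)) h hh hlt)
      rw [this, ← Finset.sum_div, ← hSdef]
      exact div_self (ne_of_gt hSpos)
    · intro k hk
      have hωeq : ω k h = d k * (1 + δ k) / S := by
        rw [hω k hk h hh hlt, hαeq k hk, hSdef]
      rw [hωeq]
      have hdk := hd k hk
      have hδk := hδ k hk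
      have e : d k * (1 + δ k) / S - d k = d k * ((1 + δ k - S) / S) := by
        field_simp
      rw [e, abs_mul, abs_of_pos hdk.1, abs_div, abs_of_pos hSpos]
      have h1 : |1 + δ k - S| ≤ Mz * h ^ (r-1) := by
        rw [abs_le]
        constructor
        · nlinarith [hδk.1, hSub]
        · nlinarith [hδk.2, hS1]
      calc d k * (|1 + δ k - S| / S) ≤ 1 * (Mz * h ^ (r-1) / 1) := by
            refine mul_le_mul hdk.2.le ?_ (by positivity) (by norm_num)
            exact div_le_div₀ (by positivity) h1 one_pos hS1
        _ = Mz * h ^ (r-1) := by ring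
  -- conclusion
  have hCfinal : (0:ℝ) < Co + ((r:ℝ) + 1) * Mz * C3 + 1 := by
    have h1 : 0 ≤ ((r:ℝ) + 1) * Mz * C3 :=
      mul_nonneg (mul_nonneg (by positivity) hMzpos.le) hC3pos.le
    linarith
  refine ⟨Co + ((r:ℝ) + 1) * Mz * C3 + 1, hCfinal, min h0 h3, lt_min hh0 hh3pos, ?_⟩
  intro h hh hlt x hx
  have hhh0 : h < h0 := lt_of_lt_of_le hlt (min_le_left _ _)
  have hhh3 : h < h3 := lt_of_lt_of_le hlt (min_le_right _ _)
  have hh1 : h < 1 := lt_of_lt_of_le hhh3 (by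
    rw [hh3def]; exact le_trans (min_le_right _ _) (min_le_right _ _))
  have hho' : h < ho := lt_of_lt_of_le hhh3 (by rw [hh3def]; exact min_le_left _ _)
  obtain ⟨hωsum, hωb⟩ := hweights h hh hhh0 hh1
  have e1 : (Prec h).eval x = ∑ k ∈ Finset.range (r + 1), ω k h * (P k h).eval x := by
    rw [hPrec h hh hhh0, Polynomial.eval_finset_sum]
    exact Finset.sum_congr rfl (fun k _ => by rw [Polynomial.eval_smul, smul_eq_mul])
  have e2 : (Popt h).eval x = ∑ k ∈ Finset.range (r + 1), d k * (P k h).eval x := by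
    have e2a : d 0 • P 0 h = Popt h - ∑ k ∈ Finset.Icc 1 r, d k • P k h := by
      rw [hP0 h hh, smul_smul, mul_inv_cancel₀ hd0ne, one_smul]
    have e2b : ∑ k ∈ Finset.range (r + 1), d k • P k h = Popt h := by
      rw [sum_range_succ_split (fun k => d k • P k h) r, e2a]
      rw [sub_add_cancel]
    have := congrArg (fun q : Polynomial ℝ => q.eval x) e2b
    simp only [Polynomial.eval_finset_sum, Polynomial.eval_smul, smul_eq_mul] at this
    exact this.symm
  have key : (Prec h).eval x - u x = ((Popt h).eval x - u x)
      + ∑ k ∈ Finset.range (r + 1), (ω k h - d k) * ((P k h).eval x - u x) := by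
    have t1 : ∑ k ∈ Finset.range (r + 1), (ω k h - d k) * ((P k h).eval x - u x)
        = (∑ k ∈ Finset.range (r + 1),
            (ω k h * (P k h).eval x - d k * (P k h).eval x))
          - (∑ k ∈ Finset.range (r + 1), (ω k h - d k)) * u x := by
      rw [Finset.sum_mul, ← Finset.sum_sub_distrib]
      exact Finset.sum_congr rfl (fun k _ => by ring)
    have t2 : ∑ k ∈ Finset.range (r + 1), (ω k h - d k) = 0 := by
      rw [Finset.sum_sub_distrib, hωsum, hdsum]
      ring
    have t3 : ∑ k ∈ Finset.range (r + 1),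
        (ω k h * (P k h).eval x - d k * (P k h).eval x)
        = (∑ k ∈ Finset.range (r + 1), ω k h * (P k h).eval x)
          - ∑ k ∈ Finset.range (r + 1), d k * (P k h).eval x :=
      Finset.sum_sub_distrib _ _
    rw [e1, e2, t1, t2, t3]
    ring
  have tri : ∀ a b : ℝ, |a + b| ≤ |a| + |b| := fun a b => abs_add_le a b
  calc |(Prec h).eval x - u x|
      ≤ |(Popt h).eval x - u x|
        + |∑ k ∈ Finset.range (r + 1), (ω k h - d k) * ((P k h).eval x - u x)| := by
        rw [key]; exact tri _ _
    _ ≤ Co * h ^ (2*r-1)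
        + ∑ k ∈ Finset.range (r + 1), (Mz * h ^ (r-1)) * (C3 * h ^ r) := by
        refine add_le_add (hbo' h hh hho' x hx) ?_
        refine le_trans (Finset.abs_sum_le_sum_abs _ _) ?_
        refine Finset.sum_le_sum (fun k hk => ?_)
        have hkr := Nat.lt_succ_iff.mp (Finset.mem_range.mp hk)
        rw [abs_mul]
        refine mul_le_mul (hωb k hkr) (hPall k hkr h hh hhh3 x hx)
          (abs_nonneg _) ?_
        have : 0 ≤ h ^ (r-1) := by positivity
        nlinarith [hMzpos]
    _ = Co * h ^ (2*r-1) + ((r:ℝ) + 1) * ((Mz * h ^ (r-1)) * (C3 * h ^ r)) := by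
        rw [Finset.sum_const, Finset.card_range, nsmul_eq_mul]
        push_cast
        ring
    _ = (Co + ((r:ℝ) + 1) * Mz * C3) * h ^ (2*r-1) := by
        rw [show (Mz * h ^ (r-1)) * (C3 * h ^ r) = Mz * C3 * (h ^ (r-1) * h ^ r) from by ring,
          ← pow_add, show (r-1) + r = 2*r-1 from by omega]
        ring
    _ ≤ (Co + ((r:ℝ) + 1) * Mz * C3 + 1) * h ^ (2*r-1) := by
        refine mul_le_mul_of_nonneg_right (by linarith) (by positivity)
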